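/- arXiv:1205.1154 — 2 statements merged into one kernel-verified Lean document; each statement's English description precedes it below -/
import Mathlib

section
/- For every \(K \ge 0\) and \(x > 0\), \( \int_0^\infty e^{-K^2 t/2} \frac{1}{\sqrt{2\pi t^3}} e^{-x^2/(2t)}\,dt = \frac{1}{x} e^{-Kx} \). -/
open MeasureTheory Real Set

/-!
Substituting `t = x² / s²` turns the integral into
`2 / (x √(2π)) · e^{-Kx} · ∫₀^∞ exp (-(s - Kx/s)² / 2) ds`. By the Cauchy–Schlömilch
transformation the last integral is half the Gaussian integral over `ℝ`: the inversion
`s ↦ Kx / s` shows `∫ g = ∫ (Kx / s²) g` for `g s = exp (-(s - Kx/s)² / 2)`, while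
`v = s - Kx / s` maps `(0, ∞)` onto `ℝ` with `dv = (1 + Kx / s²) ds`.
-/

theorem integral_Ioi_comp_div_pow {E : Type*} [NormedAddCommGroup E] [NormedSpace ℝ E]
    (F : ℝ → E) {c : ℝ} (hc : 0 < c) {n : ℕ} (hn : n ≠ 0) :
    ∫ s in Ioi 0, (n * c / s ^ (n + 1)) • F (c / s ^ n) = ∫ t in Ioi 0, F t := by
  have hp : -(n : ℝ) ≠ 0 := by simpa using hn
  have h := integral_comp_mul_left_Ioi' F 0 hc
  rw [mul_zero, ← integral_comp_rpow_Ioi (fun y => F (c * y)) hp, ← integral_smul] at h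
  rw [← h]
  refine setIntegral_congr_fun measurableSet_Ioi fun s (hs : 0 < s) => ?_
  have hpow : ∀ m : ℕ, s ^ (-(m : ℝ)) = (s ^ m)⁻¹ := fun m => by
    rw [rpow_neg hs.le, rpow_natCast]
  have hsub : -(n : ℝ) - 1 = -((n + 1 : ℕ) : ℝ) := by push_cast; ring
  simp only [hsub, hpow, abs_neg, Nat.abs_cast, smul_smul, div_eq_mul_inv]
  ring_nf

theorem hasDerivAt_sub_div (a : ℝ) {s : ℝ} (hs : s ≠ 0) :
    HasDerivAt (fun s => s - a / s) (1 + a / s ^ 2) s := by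
  simpa [div_eq_mul_inv, sub_eq_add_neg] using
    (hasDerivAt_id' s).fun_sub ((hasDerivAt_inv hs).const_mul a)

theorem strictMonoOn_sub_div {a : ℝ} (ha : 0 ≤ a) : StrictMonoOn (fun s => s - a / s) (Ioi 0) :=
  fun s (hs : 0 < s) t _ hst => by
    have : a / t ≤ a / s := div_le_div_of_nonneg_left ha hs hst.le
    dsimp only
    linarith

theorem image_sub_div_Ioi {a : ℝ} (ha : 0 < a) : (fun s => s - a / s) '' Ioi 0 = univ := by
  refine eq_univ_of_forall fun v => ?_
  set r := √(v ^ 2 + 4 * a)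
  have hr : r ^ 2 = v ^ 2 + 4 * a := sq_sqrt (by positivity)
  have hvr : -v < r := (neg_le_abs v).trans_lt (abs_lt_of_sq_lt_sq (by linarith) (sqrt_nonneg _))
  -- the positive root of `s ^ 2 - v * s - a`
  refine ⟨(v + r) / 2, by simp only [mem_Ioi]; linarith, ?_⟩
  have hs : v + r ≠ 0 := by linarith
  dsimp only
  field_simp
  linear_combination hr

theorem integral_Ioi_comp_sub_div_of_even {f : ℝ → ℝ} (hf : Integrable f)
    (heven : ∀ v, f (-v) = f v) {a : ℝ} (ha : 0 ≤ a) :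
    ∫ s in Ioi 0, f (s - a / s) = (∫ v, f v) / 2 := by
  rcases ha.eq_or_lt with rfl | hpos
  · have habs : ∫ v, f v = ∫ v, f |v| := by
      congr 1; funext v
      rcases abs_choice v with h | h <;> simp [h, heven]
    simp [habs, integral_comp_abs]
  set g := fun s => f (s - a / s)
  have hderiv : ∀ s ∈ Ioi (0 : ℝ),
      HasDerivWithinAt (fun s => s - a / s) (1 + a / s ^ 2) (Ioi 0) s :=
    fun s hs => (hasDerivAt_sub_div a (ne_of_gt hs)).hasDerivWithinAt
  have hinj := (strictMonoOn_sub_div ha).injOn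
  have hderiv_pos : ∀ s, 0 < 1 + a / s ^ 2 := fun s => by positivity
  have hchange := integral_image_eq_integral_abs_deriv_smul measurableSet_Ioi hderiv hinj f
  have hint :=
    (integrableOn_image_iff_integrableOn_abs_deriv_smul measurableSet_Ioi hderiv hinj f).1
  simp only [image_sub_div_Ioi hpos, setIntegral_univ, integrableOn_univ, smul_eq_mul,
    abs_of_pos (hderiv_pos _)] at hchange hint
  specialize hint hf
  have hg : IntegrableOn g (Ioi 0) := by
    refine IntegrableOn.congr_fun (hint.bdd_mul (f := fun s => (1 + a / s ^ 2)⁻¹) (c := 1)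
      (by fun_prop : Measurable _).aestronglyMeasurable (ae_of_all _ fun s => ?_))
      (fun s _ => ?_) measurableSet_Ioi
    · rw [norm_inv, Real.norm_of_nonneg (hderiv_pos s).le]
      exact inv_le_one_of_one_le₀ (le_add_of_nonneg_right (by positivity))
    · simp only [g]
      field_simp [(hderiv_pos s).ne']
  -- `s ↦ a / s` swaps `s - a / s` and its negative
  have hrefl : ∫ s in Ioi 0, g s = ∫ s in Ioi 0, a / s ^ 2 * g s := by
    rw [← integral_Ioi_comp_div_pow g hpos one_ne_zero]
    refine setIntegral_congr_fun measurableSet_Ioi fun s (hs : 0 < s) => ?_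
    simp only [g, smul_eq_mul, Nat.cast_one, one_mul, pow_one]
    rw [← heven]
    congr 2
    field_simp
    ring
  have hsplit : ∫ s in Ioi 0, a / s ^ 2 * g s = (∫ v, f v) - ∫ s in Ioi 0, g s := by
    rw [hchange, ← integral_sub hint hg]
    congr 1; funext s
    ring
  linarith

theorem integral_Ioi_exp_neg_sq_add_sq_div_sq {a : ℝ} (ha : 0 ≤ a) :
    ∫ s in Ioi 0, exp (-(s ^ 2 + a ^ 2 / s ^ 2) / 2) = √(2 * π) / 2 * exp (-a) := by
  have hsq : ∀ s ∈ Ioi (0 : ℝ),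
      exp (-(s ^ 2 + a ^ 2 / s ^ 2) / 2) = exp (-a) * exp (-(1 / 2) * (s - a / s) ^ 2) :=
    fun s (hs : 0 < s) => by
      rw [← exp_add]
      congr 1
      field_simp
      ring
  rw [setIntegral_congr_fun measurableSet_Ioi hsq, integral_const_mul,
    integral_Ioi_comp_sub_div_of_even (integrable_exp_neg_mul_sq one_half_pos) (by simp) ha,
    integral_gaussian, div_div_eq_mul_div, div_one, mul_comm π]
  ring

theorem laplace_transform_hitting_density (K x : ℝ) (hK : 0 ≤ K) (hx : 0 < x) :
    ∫ t in Set.Ioi (0:ℝ),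
      Real.exp (-(K ^ 2 * t) / 2) * (1 / Real.sqrt (2 * Real.pi * t ^ 3)) *
        Real.exp (-x ^ 2 / (2 * t)) = (1 / x) * Real.exp (-K * x) := by
  rw [← integral_Ioi_comp_div_pow _ (pow_pos hx 2) two_ne_zero]
  calc _ = ∫ s in Ioi 0, 2 / (x * √(2 * π)) * exp (-(s ^ 2 + (K * x) ^ 2 / s ^ 2) / 2) :=
        setIntegral_congr_fun measurableSet_Ioi fun s (hs : 0 < s) => by
          have hroot : √(2 * π * (x ^ 2 / s ^ 2) ^ 3) = √(2 * π) * (x ^ 3 / s ^ 3) := by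
            rw [sqrt_mul (by positivity), show (x ^ 2 / s ^ 2) ^ 3 = (x ^ 3 / s ^ 3) ^ 2 by ring,
              sqrt_sq (by positivity)]
          have hexp : -(s ^ 2 + (K * x) ^ 2 / s ^ 2) / 2 =
              -(K ^ 2 * (x ^ 2 / s ^ 2)) / 2 + -x ^ 2 / (2 * (x ^ 2 / s ^ 2)) := by
            field_simp
            ring
          rw [hroot, hexp, exp_add, smul_eq_mul, Nat.cast_ofNat]
          field_simp
    _ = _ := by
      rw [integral_const_mul, integral_Ioi_exp_neg_sq_add_sq_div_sq (by positivity)]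
      field_simp
end

section
/- For every \(K \ge 0\) and \(x > 0\), \( \int_0^\infty \frac{e^{-K^2 t/2}}{t} \cdot \frac{x}{\sqrt{2\pi t^3}} e^{-x^2/(2t)}\,dt = \frac{1 + Kx}{x^2} e^{-Kx} \). -/
/-!
With `a = x`, `b = K` the integrand is `x / √(2π)` times `t^(-5/2) e^(-a²/(2t) - b²t/2)`.
Let `N y = ∫₀^y e^(-s²/2) ds`. Completing the square,
`(a/√t + c√t)²/2 = a²/(2t) + c²t/2 + ac`, so `N (a/√t ± b√t)` has derivative
`e^(∓ab) e^(-a²/(2t) - b²t/2) (±bt - a)/(2t√t)`. A combination of these two functions with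
`e^(-a²/(2t) - b²t/2)/√t` is an antiderivative of `a³ t^(-5/2) e^(-a²/(2t) - b²t/2)`.
As `t → 0⁺` both arguments of `N` tend to `+∞`, while as `t → ∞` they tend to `±∞`;
the difference of the two limits is `√(2π) (1 + ab) e^(-ab)`.
-/

open MeasureTheory Real Set Filter Topology

theorem integral_Ioi_of_hasDerivAt_of_nonneg_of_tendsto_nhdsGT {g g' : ℝ → ℝ} {a ga gb : ℝ}
    (hderiv : ∀ x ∈ Ioi a, HasDerivAt g (g' x) x) (hg' : ∀ x ∈ Ioi a, 0 ≤ g' x)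
    (hbot : Tendsto g (𝓝[>] a) (𝓝 ga)) (htop : Tendsto g atTop (𝓝 gb)) :
    ∫ x in Ioi a, g' x = gb - ga := by
  rw [← Ici_sdiff_left] at hbot
  have hupdate : ∀ x ∈ Ioi a, Function.update g a ga x = g x := fun x hx =>
    Function.update_of_ne (ne_of_gt hx) _ _
  refine integral_Ioi_of_hasDerivAt_of_nonneg (continuousWithinAt_update_same.mpr hbot)
    (fun x hx => (hderiv x hx).congr_of_eventuallyEq ?_) hg' (htop.congr' ?_) |>.trans ?_
  · filter_upwards [Ioi_mem_nhds hx] with y hy using hupdate y hy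
  · filter_upwards [Ioi_mem_atTop a] with y hy using (hupdate y hy).symm
  · simp

noncomputable def gaussPrimitive (y : ℝ) : ℝ := ∫ s in (0:ℝ)..y, exp (-s ^ 2 / 2)

theorem hasDerivAt_gaussPrimitive (y : ℝ) : HasDerivAt gaussPrimitive (exp (-y ^ 2 / 2)) y := by
  have hcont : Continuous fun s : ℝ => exp (-s ^ 2 / 2) := by fun_prop
  exact intervalIntegral.integral_hasDerivAt_right (hcont.intervalIntegrable _ _)
    (hcont.stronglyMeasurableAtFilter _ _) hcont.continuousAt

theorem continuous_gaussPrimitive : Continuous gaussPrimitive :=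
  continuous_iff_continuousAt.2 fun y => (hasDerivAt_gaussPrimitive y).continuousAt

@[simp]
theorem gaussPrimitive_zero : gaussPrimitive 0 = 0 := intervalIntegral.integral_same

theorem gaussPrimitive_neg (y : ℝ) : gaussPrimitive (-y) = -gaussPrimitive y := by
  simp only [gaussPrimitive, ← intervalIntegral.integral_symm]
  have h := intervalIntegral.integral_comp_neg (a := y) (b := 0) fun s => exp (-s ^ 2 / 2)
  simp only [neg_sq, neg_zero] at h
  rw [← h]

theorem tendsto_gaussPrimitive_atTop : Tendsto gaussPrimitive atTop (𝓝 (√(2 * π) / 2)) := by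
  have hint : IntegrableOn (fun s : ℝ => exp (-s ^ 2 / 2)) (Ioi 0) := by
    simpa [div_eq_inv_mul] using (integrable_exp_neg_mul_sq (b := 1 / 2) (by norm_num)).integrableOn
  have hval : ∫ s in Ioi (0:ℝ), exp (-s ^ 2 / 2) = √(2 * π) / 2 := by
    simpa [div_eq_inv_mul, mul_comm] using integral_gaussian_Ioi (1 / 2)
  exact hval ▸ intervalIntegral_tendsto_integral_Ioi 0 hint tendsto_id

theorem tendsto_gaussPrimitive_atBot : Tendsto gaussPrimitive atBot (𝓝 (-(√(2 * π) / 2))) :=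
  (tendsto_gaussPrimitive_atTop.comp tendsto_neg_atBot_atTop).neg.congr fun y => by
    simp [gaussPrimitive_neg]

theorem tendsto_div_sqrt_add_mul_sqrt_nhdsGT_zero {a : ℝ} (ha : 0 < a) (c : ℝ) :
    Tendsto (fun t => a / √t + c * √t) (𝓝[>] 0) atTop := by
  have hdiv : Tendsto (fun t => a / √t) (𝓝[>] 0) atTop :=
    ((tendsto_sqrt_atTop.comp tendsto_inv_nhdsGT_zero).const_mul_atTop ha).congr fun t => by
      simp [sqrt_inv, div_eq_mul_inv]
  have hmul : Tendsto (fun t => c * √t) (𝓝[>] 0) (𝓝 0) := by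
    simpa using ((continuous_sqrt.tendsto 0).const_mul c).mono_left nhdsWithin_le_nhds
  exact hdiv.atTop_add hmul

theorem tendsto_div_sqrt_atTop (a : ℝ) : Tendsto (fun t => a / √t) atTop (𝓝 0) :=
  tendsto_const_nhds.div_atTop tendsto_sqrt_atTop

theorem tendsto_gaussPrimitive_div_sqrt_add_mul_sqrt_atTop (a c : ℝ) :
    Tendsto (fun t => gaussPrimitive (a / √t + c * √t)) atTop
      (𝓝 (Real.sign c * (√(2 * π) / 2))) := by
  rcases lt_trichotomy c 0 with hc | rfl | hc
  · rw [Real.sign_of_neg hc, neg_one_mul]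
    exact tendsto_gaussPrimitive_atBot.comp
      ((tendsto_div_sqrt_atTop a).add_atBot (tendsto_sqrt_atTop.const_mul_atTop_of_neg hc))
  · simp only [zero_mul, add_zero, Real.sign_zero]
    exact gaussPrimitive_zero ▸
      (continuous_gaussPrimitive.tendsto 0).comp (tendsto_div_sqrt_atTop a)
  · rw [Real.sign_of_pos hc, one_mul]
    exact tendsto_gaussPrimitive_atTop.comp
      ((tendsto_div_sqrt_atTop a).add_atTop (tendsto_sqrt_atTop.const_mul_atTop hc))

theorem hasDerivAt_gaussPrimitive_div_sqrt_add_mul_sqrt (a c : ℝ) {t : ℝ} (ht : 0 < t) :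
    HasDerivAt (fun u => gaussPrimitive (a / √u + c * √u))
      (exp (-(a * c)) * exp (-a ^ 2 / (2 * t) - c ^ 2 * t / 2) * ((c * t - a) / (2 * t * √t)))
      t := by
  have hst : 0 < √t := sqrt_pos.2 ht
  have hsq : √t ^ 2 = t := sq_sqrt ht.le
  have hs : HasDerivAt (fun u => √u) (1 / (2 * √t)) t := hasDerivAt_sqrt ht.ne'
  have harg : HasDerivAt (fun u => a / √u + c * √u) ((c * t - a) / (2 * t * √t)) t := by
    refine (((hasDerivAt_const t a).div hs hst.ne').add (hs.const_mul c)).congr_deriv ?_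
    field_simp
    simp only [hsq]
    ring
  refine ((hasDerivAt_gaussPrimitive _).comp t harg).congr_deriv ?_
  rw [← exp_add]
  congr 2
  field_simp
  simp only [hsq]
  ring

-- The coefficients are forced by matching the coefficients of `1, t, t²` in the derivative.
noncomputable def fiveHalvesPrimitive (a b t : ℝ) : ℝ :=
  2 * a * (exp (-a ^ 2 / (2 * t) - b ^ 2 * t / 2) / √t)
    + (a * b - 1) * exp (a * b) * gaussPrimitive (a / √t + b * √t)
    - (a * b + 1) * exp (-(a * b)) * gaussPrimitive (a / √t + -b * √t)

theorem hasDerivAt_fiveHalvesPrimitive (a b : ℝ) {t : ℝ} (ht : 0 < t) :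
    HasDerivAt (fiveHalvesPrimitive a b)
      (a ^ 3 * (exp (-a ^ 2 / (2 * t) - b ^ 2 * t / 2) / (t ^ 2 * √t))) t := by
  have hst : 0 < √t := sqrt_pos.2 ht
  have hsq : √t ^ 2 = t := sq_sqrt ht.le
  have hexponent : HasDerivAt (fun u => -a ^ 2 / (2 * u) - b ^ 2 * u / 2)
      ((a ^ 2 - b ^ 2 * t ^ 2) / (2 * t ^ 2)) t := by
    refine (((hasDerivAt_const t (-a ^ 2)).div ((hasDerivAt_id' t).const_mul 2)
      (by positivity)).sub (((hasDerivAt_id' t).const_mul (b ^ 2)).div_const 2)).congr_deriv ?_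
    field_simp
    ring
  have hfirst := (hexponent.exp.div (hasDerivAt_sqrt ht.ne') hst.ne').const_mul (2 * a)
  have hplus := (hasDerivAt_gaussPrimitive_div_sqrt_add_mul_sqrt a b ht).const_mul
    ((a * b - 1) * exp (a * b))
  have hminus := (hasDerivAt_gaussPrimitive_div_sqrt_add_mul_sqrt a (-b) ht).const_mul
    ((a * b + 1) * exp (-(a * b)))
  refine ((hfirst.add hplus).sub hminus).congr_deriv ?_
  simp only [mul_neg, neg_mul, neg_neg, even_two.neg_pow]
  have hexp : exp (a * b) * exp (-(a * b)) = 1 := by rw [← exp_add]; simp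
  field_simp
  linear_combination (2 * a * t * √t ^ 2 * (b ^ 2 * t + 1)) * hexp + 2 * a * t * hsq

theorem exp_neg_div_sub_mul_div_sqrt_le (a b : ℝ) {t : ℝ} (ht : 0 < t) :
    exp (-a ^ 2 / (2 * t) - b ^ 2 * t / 2) / √t ≤ √t⁻¹ * exp (-(a ^ 2 / 2) * t⁻¹) := by
  rw [sqrt_inv, ← div_eq_inv_mul]
  gcongr
  have : 0 ≤ b ^ 2 * t / 2 := by positivity
  linarith [show -(a ^ 2 / 2) * t⁻¹ = -a ^ 2 / (2 * t) by ring]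

theorem tendsto_exp_neg_div_sub_mul_div_sqrt_nhdsGT_zero {a : ℝ} (ha : a ≠ 0) (b : ℝ) :
    Tendsto (fun t => exp (-a ^ 2 / (2 * t) - b ^ 2 * t / 2) / √t) (𝓝[>] 0) (𝓝 0) := by
  have hbound :
      Tendsto (fun t : ℝ => √t⁻¹ * exp (-(a ^ 2 / 2) * t⁻¹)) (𝓝[>] 0) (𝓝 0) := by
    have h := (tendsto_rpow_mul_exp_neg_mul_atTop_nhds_zero (1 / 2) (a ^ 2 / 2)
      (by positivity)).comp tendsto_inv_nhdsGT_zero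
    refine h.congr fun t => ?_
    simp [sqrt_eq_rpow]
  refine tendsto_of_tendsto_of_tendsto_of_le_of_le' tendsto_const_nhds hbound ?_ ?_
  · filter_upwards [self_mem_nhdsWithin] with t (ht : 0 < t) using by positivity
  · filter_upwards [self_mem_nhdsWithin] with t (ht : 0 < t)
      using exp_neg_div_sub_mul_div_sqrt_le a b ht

theorem tendsto_exp_neg_div_sub_mul_div_sqrt_atTop (a b : ℝ) :
    Tendsto (fun t => exp (-a ^ 2 / (2 * t) - b ^ 2 * t / 2) / √t) atTop (𝓝 0) := by
  refine tendsto_of_tendsto_of_tendsto_of_le_of_le' tendsto_const_nhds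
    (tendsto_div_sqrt_atTop 1) ?_ ?_
  · filter_upwards [eventually_gt_atTop 0] with t ht using by positivity
  · filter_upwards [eventually_gt_atTop 0] with t ht
    gcongr
    rw [exp_le_one_iff, neg_div]
    have : 0 ≤ b ^ 2 * t / 2 := by positivity
    have : 0 ≤ a ^ 2 / (2 * t) := by positivity
    linarith

theorem tendsto_fiveHalvesPrimitive_nhdsGT_zero {a : ℝ} (ha : 0 < a) (b : ℝ) :
    Tendsto (fiveHalvesPrimitive a b) (𝓝[>] 0)
      (𝓝 (((a * b - 1) * exp (a * b) - (a * b + 1) * exp (-(a * b))) * (√(2 * π) / 2))) := by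
  have hfirst := tendsto_exp_neg_div_sub_mul_div_sqrt_nhdsGT_zero ha.ne' b
  have hplus := tendsto_gaussPrimitive_atTop.comp (tendsto_div_sqrt_add_mul_sqrt_nhdsGT_zero ha b)
  have hminus :=
    tendsto_gaussPrimitive_atTop.comp (tendsto_div_sqrt_add_mul_sqrt_nhdsGT_zero ha (-b))
  have h : Tendsto (fiveHalvesPrimitive a b) (𝓝[>] 0) _ :=
    ((hfirst.const_mul (2 * a)).add (hplus.const_mul ((a * b - 1) * exp (a * b)))).sub
      (hminus.const_mul ((a * b + 1) * exp (-(a * b))))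
  convert h using 2
  ring

theorem tendsto_fiveHalvesPrimitive_atTop (a : ℝ) {b : ℝ} (hb : 0 ≤ b) :
    Tendsto (fiveHalvesPrimitive a b) atTop
      (𝓝 (((a * b - 1) * exp (a * b) + (a * b + 1) * exp (-(a * b))) * (√(2 * π) / 2))) := by
  have hfirst := tendsto_exp_neg_div_sub_mul_div_sqrt_atTop a b
  have hplus := tendsto_gaussPrimitive_div_sqrt_add_mul_sqrt_atTop a b
  have hminus := tendsto_gaussPrimitive_div_sqrt_add_mul_sqrt_atTop a (-b)
  have h : Tendsto (fiveHalvesPrimitive a b) atTop _ :=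
    ((hfirst.const_mul (2 * a)).add (hplus.const_mul ((a * b - 1) * exp (a * b)))).sub
      (hminus.const_mul ((a * b + 1) * exp (-(a * b))))
  convert h using 2
  rcases hb.eq_or_lt with rfl | hb
  · simp
  · rw [Real.sign_of_pos hb, Real.sign_of_neg (neg_lt_zero.2 hb)]
    ring

theorem integral_Ioi_exp_neg_div_sub_mul_div_sq_mul_sqrt {a b : ℝ} (ha : 0 < a) (hb : 0 ≤ b) :
    ∫ t in Ioi 0, exp (-a ^ 2 / (2 * t) - b ^ 2 * t / 2) / (t ^ 2 * √t)
      = √(2 * π) * (1 + a * b) / a ^ 3 * exp (-(a * b)) := by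
  have h := integral_Ioi_of_hasDerivAt_of_nonneg_of_tendsto_nhdsGT
    (fun t ht => hasDerivAt_fiveHalvesPrimitive a b ht) (fun t (ht : 0 < t) => by positivity)
    (tendsto_fiveHalvesPrimitive_nhdsGT_zero ha b) (tendsto_fiveHalvesPrimitive_atTop a hb)
  rw [integral_const_mul] at h
  set I := ∫ t in Ioi 0, exp (-a ^ 2 / (2 * t) - b ^ 2 * t / 2) / (t ^ 2 * √t)
  field_simp
  linear_combination h

theorem weighted_laplace_transform_hitting_density (K x : ℝ) (hK : 0 ≤ K) (hx : 0 < x) :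
    ∫ t in Set.Ioi (0:ℝ),
      Real.exp (-(K ^ 2 * t) / 2) / t *
        (x / Real.sqrt (2 * Real.pi * t ^ 3) * Real.exp (-x ^ 2 / (2 * t)))
      = (1 + K * x) / x ^ 2 * Real.exp (-K * x) := by
  have hintegrand : ∀ t ∈ Ioi (0:ℝ), exp (-(K ^ 2 * t) / 2) / t *
      (x / √(2 * π * t ^ 3) * exp (-x ^ 2 / (2 * t)))
        = x / √(2 * π) * (exp (-x ^ 2 / (2 * t) - K ^ 2 * t / 2) / (t ^ 2 * √t)) := by
    intro t (ht : 0 < t)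
    have hsqrt : √(2 * π * t ^ 3) = √(2 * π) * (t * √t) := by
      rw [pow_succ, ← mul_assoc, sqrt_mul (by positivity) t,
        sqrt_mul (by positivity : (0:ℝ) ≤ 2 * π), sqrt_sq ht.le, mul_assoc]
    rw [hsqrt, sub_eq_add_neg, exp_add]
    field_simp
  rw [setIntegral_congr_fun measurableSet_Ioi hintegrand, integral_const_mul,
    integral_Ioi_exp_neg_div_sub_mul_div_sq_mul_sqrt hx hK]
  field_simp
end
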